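/- Let F₁₁ : J → ℝ^{(n−k)×(n−k)}, F₁₂ : J → ℝ^{(n−k)×k} and F₂₂ : J → ℝ^{k×k} be continuous and uniformly bounded, and suppose the systems ė₁ = F₁₁(t)e₁ and ė₂ = F₂₂(t)e₂ are each uniformly exponentially stable. Then the block upper triangular system ė(t) = [[F₁₁(t), F₁₂(t)], [0, F₂₂(t)]] e(t) is uniformly exponentially stable. -/

import Mathlib

noncomputable section

open Matrix Set

/-- Euclidean (spectral / 2-norm) operator norm of a real matrix. -/
noncomputable def mnorm {m n : Type*} [Fintype m] [Fintype n] [DecidableEq n]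
    (M : Matrix m n ℝ) : ℝ :=
  ‖LinearMap.toContinuousLinearMap (Matrix.toEuclideanLin M)‖

/-- Euclidean 2-norm of a vector. -/
noncomputable def vnorm {n : Type*} [Fintype n] (v : n → ℝ) : ℝ :=
  Real.sqrt (∑ i, (v i) ^ 2)

/-- A matrix-valued function is uniformly bounded on `J = [0, ∞)`. -/
def UnifBdd {m n : Type*} [Fintype m] [Fintype n] [DecidableEq n]
    (A : ℝ → Matrix m n ℝ) : Prop :=
  ∃ a : ℝ, ∀ t ∈ Ici (0 : ℝ), mnorm (A t) ≤ a

/-- A matrix-valued function is continuous on `J = [0, ∞)` (entrywise). -/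
def ContinuousOnJ {m n : Type*} (A : ℝ → Matrix m n ℝ) : Prop :=
  ∀ i j, ContinuousOn (fun t => A t i j) (Ici (0 : ℝ))

/-- `X` is a fundamental matrix solution of `ẋ = A(t) x` on `J = [0, ∞)`. -/
def IsFundamentalSolution {n : Type*} [Fintype n] [DecidableEq n]
    (A X : ℝ → Matrix n n ℝ) : Prop :=
  (∀ t ∈ Ici (0 : ℝ), IsUnit (X t)) ∧
  ∀ t ∈ Ici (0 : ℝ), ∀ i j,
    HasDerivWithinAt (fun s => X s i j) ((A t * X t) i j) (Ici (0 : ℝ)) t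

/-- `Φ` is the state transition matrix of `ẋ = A(t) x` on `J = [0, ∞)`:
`∂Φ(t,t₀)/∂t = A(t) Φ(t,t₀)`, `Φ(t₀,t₀) = I`. -/
def IsStateTransition {n : Type*} [Fintype n] [DecidableEq n]
    (A : ℝ → Matrix n n ℝ) (Φ : ℝ → ℝ → Matrix n n ℝ) : Prop :=
  (∀ t₀ ∈ Ici (0 : ℝ), Φ t₀ t₀ = 1) ∧
  ∀ t₀ ∈ Ici (0 : ℝ), ∀ t ∈ Ici (0 : ℝ), ∀ i j,
    HasDerivWithinAt (fun s => Φ s t₀ i j) ((A t * Φ t t₀) i j) (Ici (0 : ℝ)) t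

/-- The system `ẋ = F(t) x` is uniformly exponentially stable. -/
def SysUES {n : Type*} [Fintype n] [DecidableEq n] (F : ℝ → Matrix n n ℝ) : Prop :=
  ∃ K : ℝ, 1 ≤ K ∧ ∃ μ : ℝ, 0 < μ ∧
    ∀ Φ : ℝ → ℝ → Matrix n n ℝ, IsStateTransition F Φ →
      ∀ t₀ ∈ Ici (0 : ℝ), ∀ t, t₀ ≤ t →
        mnorm (Φ t t₀) ≤ K * Real.exp (-μ * (t - t₀))

/-- The pair `(A(t), C(t))` is uniformly exponentially detectable. -/
def UnifDetectable {n p : Type*} [Fintype n] [DecidableEq n] [Fintype p] [DecidableEq p]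
    (A : ℝ → Matrix n n ℝ) (C : ℝ → Matrix p n ℝ) : Prop :=
  ∃ L : ℝ → Matrix n p ℝ, ContinuousOnJ L ∧ UnifBdd L ∧
    SysUES (fun t => A t - L t * C t)

/-- Observability Gramian `M(t₁, t₀) = ∫_{t₀}^{t₁} Φ(s,t₀)ᵀ C(s)ᵀ C(s) Φ(s,t₀) ds`. -/
noncomputable def gramian {n p : Type*} [Fintype n] [Fintype p]
    (C : ℝ → Matrix p n ℝ) (Φ : ℝ → ℝ → Matrix n n ℝ) (t₀ t₁ : ℝ) :
    Matrix n n ℝ :=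
  Matrix.of fun i j => ∫ s in t₀..t₁, ((Φ s t₀)ᵀ * (C s)ᵀ * C s * Φ s t₀) i j

/-- The pair `(A(t), C(t))` is uniformly completely observable:
`β₁ I ⪯ M(t₀+σ, t₀) ⪯ β₂ I` for all `t₀ ∈ J`. -/
def UCO {n p : Type*} [Fintype n] [DecidableEq n] [Fintype p]
    (A : ℝ → Matrix n n ℝ) (C : ℝ → Matrix p n ℝ) : Prop :=
  ∃ σ : ℝ, 0 < σ ∧ ∃ β₁ : ℝ, 0 < β₁ ∧ ∃ β₂ : ℝ, 0 < β₂ ∧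
    ∀ Φ : ℝ → ℝ → Matrix n n ℝ, IsStateTransition A Φ →
      ∀ t₀ ∈ Ici (0 : ℝ),
        (gramian C Φ t₀ (t₀ + σ) - β₁ • (1 : Matrix n n ℝ)).PosSemidef ∧
        (β₂ • (1 : Matrix n n ℝ) - gramian C Φ t₀ (t₀ + σ)).PosSemidef

/-- Exponential dichotomy estimates for the fundamental solution `X` with
projection `P` and constants `K ≥ 1`, `α > 0`. -/
def ExpDichotomyWith {n : Type*} [Fintype n] [DecidableEq n]
    (X : ℝ → Matrix n n ℝ) (P : Matrix n n ℝ) (K α : ℝ) : Prop :=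
  P * P = P ∧ 1 ≤ K ∧ 0 < α ∧
  (∀ t₀ ∈ Ici (0 : ℝ), ∀ t, t₀ ≤ t →
    mnorm (X t * P * (X t₀)⁻¹) ≤ K * Real.exp (-α * (t - t₀))) ∧
  (∀ t ∈ Ici (0 : ℝ), ∀ t₀, t ≤ t₀ →
    mnorm (X t * (1 - P) * (X t₀)⁻¹) ≤ K * Real.exp (α * (t - t₀)))

/-- The system `ẋ = A(t) x` admits an exponential dichotomy on `J` with projection `P`. -/
def HasExpDichotomy {n : Type*} [Fintype n] [DecidableEq n]
    (A : ℝ → Matrix n n ℝ) (P : Matrix n n ℝ) : Prop :=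
  ∃ X : ℝ → Matrix n n ℝ, ∃ K α : ℝ,
    IsFundamentalSolution A X ∧ ExpDichotomyWith X P K α

/-- `(S, S')` is a Lyapunov transformation together with its derivative:
`S` is continuously differentiable with derivative `S'`, invertible for each `t`,
and `S`, `S⁻¹`, `S'` are uniformly bounded on `J`. -/
def IsLyapunovPair {n : Type*} [Fintype n] [DecidableEq n]
    (S S' : ℝ → Matrix n n ℝ) : Prop :=
  (∀ t ∈ Ici (0 : ℝ), IsUnit (S t)) ∧
  (∀ t ∈ Ici (0 : ℝ), ∀ i j,
    HasDerivWithinAt (fun s => S s i j) (S' t i j) (Ici (0 : ℝ)) t) ∧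
  ContinuousOnJ S' ∧
  UnifBdd S ∧ UnifBdd (fun t => (S t)⁻¹) ∧ UnifBdd S'

/-!
The (2,1) block of the state transition matrix `Φ` of the block triangular system solves
`Ẋ = F₂₂ X` with `X(t₀) = 0`, so it vanishes by uniqueness. Hence the diagonal blocks `Φ₁₁`,
`Φ₂₂` are state transition matrices of `F₁₁`, `F₂₂` and decay exponentially. The cocycle
property of `Φ` gives the renewal identity
`Φ₁₂(u, τ) = Φ₁₁(u, τ + σ) Φ₁₂(τ + σ, τ) + Φ₁₂(u, τ + σ) Φ₂₂(τ + σ, τ)`.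
Grönwall's inequality bounds `Φ₁₂` on windows of length `σ`, and for `σ` so large that
`‖Φ₂₂(τ + σ, τ)‖ e^{νσ} ≤ 1/2` the identity becomes an induction over windows showing that
`Φ₁₂` decays at rate `ν` as well.
-/

open Real
open scoped Matrix.Norms.L2Operator

section MatrixCalculus

variable {m n : Type*} [Fintype m] [Fintype n] [DecidableEq n]

theorem mnorm_eq_norm (M : Matrix m n ℝ) : mnorm M = ‖M‖ := rfl

theorem hasDerivWithinAt_matrix_iff {X : ℝ → Matrix m n ℝ} {X' : Matrix m n ℝ} {s : Set ℝ}
    {t : ℝ} :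
    HasDerivWithinAt X X' s t ↔ ∀ i j, HasDerivWithinAt (fun u => X u i j) (X' i j) s t := by
  simp only [hasDerivWithinAt_iff_tendsto_slope]
  exact tendsto_pi_nhds.trans (forall_congr' fun i => tendsto_pi_nhds)

variable [DecidableEq m]

section Blocks

variable {X : ℝ → Matrix (m ⊕ n) (m ⊕ n) ℝ} {X' : Matrix (m ⊕ n) (m ⊕ n) ℝ} {s : Set ℝ} {t : ℝ}

theorem HasDerivWithinAt.matrix_toBlocks₁₁ (h : HasDerivWithinAt X X' s t) :
    HasDerivWithinAt (fun u => (X u).toBlocks₁₁) X'.toBlocks₁₁ s t :=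
  hasDerivWithinAt_matrix_iff.2 fun i j => hasDerivWithinAt_matrix_iff.1 h (.inl i) (.inl j)

theorem HasDerivWithinAt.matrix_toBlocks₁₂ (h : HasDerivWithinAt X X' s t) :
    HasDerivWithinAt (fun u => (X u).toBlocks₁₂) X'.toBlocks₁₂ s t :=
  hasDerivWithinAt_matrix_iff.2 fun i j => hasDerivWithinAt_matrix_iff.1 h (.inl i) (.inr j)

theorem HasDerivWithinAt.matrix_toBlocks₂₁ (h : HasDerivWithinAt X X' s t) :
    HasDerivWithinAt (fun u => (X u).toBlocks₂₁) X'.toBlocks₂₁ s t :=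
  hasDerivWithinAt_matrix_iff.2 fun i j => hasDerivWithinAt_matrix_iff.1 h (.inr i) (.inl j)

theorem HasDerivWithinAt.matrix_toBlocks₂₂ (h : HasDerivWithinAt X X' s t) :
    HasDerivWithinAt (fun u => (X u).toBlocks₂₂) X'.toBlocks₂₂ s t :=
  hasDerivWithinAt_matrix_iff.2 fun i j => hasDerivWithinAt_matrix_iff.1 h (.inr i) (.inr j)

end Blocks

theorem Matrix.lipschitzWith_mul_left {A : Matrix m m ℝ} {a : ℝ} (hA : ‖A‖ ≤ a) :
    LipschitzWith a.toNNReal fun X : Matrix m n ℝ => A * X :=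
  LipschitzWith.of_dist_le_mul fun X Y => by
    rw [dist_eq_norm, dist_eq_norm, ← Matrix.mul_sub]
    exact (l2_opNorm_mul A (X - Y)).trans
      (mul_le_mul_of_nonneg_right (hA.trans (le_coe_toNNReal a)) (norm_nonneg _))

theorem Matrix.exists_norm_fromBlocks_zero₂₁_le :
    ∃ c, 0 ≤ c ∧ ∀ (A : Matrix m m ℝ) (B : Matrix m n ℝ) (D : Matrix n n ℝ),
      ‖fromBlocks A B 0 D‖ ≤ c * (‖A‖ + ‖B‖ + ‖D‖) := by
  let L : (Matrix m m ℝ × Matrix m n ℝ × Matrix n n ℝ) →ₗ[ℝ] Matrix (m ⊕ n) (m ⊕ n) ℝ :=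
    { toFun := fun p => fromBlocks p.1 p.2.1 0 p.2.2
      map_add' := fun p q => by simp [fromBlocks_add]
      map_smul' := fun r p => by simp [fromBlocks_smul] }
  refine ⟨‖LinearMap.toContinuousLinearMap L‖, ContinuousLinearMap.opNorm_nonneg _,
    fun A B D => ((LinearMap.toContinuousLinearMap L).le_opNorm (A, B, D)).trans ?_⟩
  have := norm_nonneg A; have := norm_nonneg B; have := norm_nonneg D
  gcongr
  exact max_le (by linarith) (max_le (by linarith) (by linarith))

end MatrixCalculus

section LinearODE

variable {m n : Type*} [Fintype m] [Fintype n] [DecidableEq m] [DecidableEq n]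

theorem eqOn_Ici_of_hasDerivWithinAt_mul {A : ℝ → Matrix m m ℝ} {a : ℝ}
    (hA : ∀ t ∈ Ici (0 : ℝ), ‖A t‖ ≤ a) {X Y : ℝ → Matrix m n ℝ}
    (hX : ∀ t ∈ Ici (0 : ℝ), HasDerivWithinAt X (A t * X t) (Ici 0) t)
    (hY : ∀ t ∈ Ici (0 : ℝ), HasDerivWithinAt Y (A t * Y t) (Ici 0) t)
    {t₀ : ℝ} (ht₀ : t₀ ∈ Ici (0 : ℝ)) (h : X t₀ = Y t₀) : EqOn X Y (Ici 0) := by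
  have hLip : ∀ t ∈ Ici (0 : ℝ),
      LipschitzOnWith a.toNNReal (fun Z : Matrix m n ℝ => A t * Z) univ :=
    fun t ht => (lipschitzWith_mul_left (hA t ht)).lipschitzOnWith
  have hsol : ∀ Z : ℝ → Matrix m n ℝ,
      (∀ t ∈ Ici (0 : ℝ), HasDerivWithinAt Z (A t * Z t) (Ici 0) t) → ContinuousOn Z (Ici 0) ∧
        (∀ s ∈ Ici (0 : ℝ), HasDerivWithinAt Z (A s * Z s) (Ici s) s) ∧
        ∀ s ∈ Ioi (0 : ℝ), HasDerivWithinAt Z (A s * Z s) (Iic s) s :=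
    fun Z hZ => ⟨fun t ht => (hZ t ht).continuousWithinAt,
      fun s hs => (hZ s hs).mono (Ici_subset_Ici.2 hs),
      fun s hs => ((hZ s (mem_Ici.2 hs.le)).hasDerivAt (Ici_mem_nhds hs)).hasDerivWithinAt⟩
  obtain ⟨hXc, hXr, hXl⟩ := hsol X hX
  obtain ⟨hYc, hYr, hYl⟩ := hsol Y hY
  intro t (ht : 0 ≤ t)
  rcases le_total t₀ t with hle | hle
  · have hsub : Icc t₀ t ⊆ Ici 0 := fun s hs => le_trans ht₀ hs.1
    exact ODE_solution_unique_of_mem_Icc_right (v := fun s Z => A s * Z) (s := fun _ => univ)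
      (fun s hs => hLip s (hsub (Ico_subset_Icc_self hs))) (hXc.mono hsub)
      (fun s hs => hXr s (hsub (Ico_subset_Icc_self hs))) (fun _ _ => trivial) (hYc.mono hsub)
      (fun s hs => hYr s (hsub (Ico_subset_Icc_self hs))) (fun _ _ => trivial) h ⟨hle, le_rfl⟩
  · have hsub : Icc t t₀ ⊆ Ici 0 := fun s hs => ht.trans hs.1
    exact ODE_solution_unique_of_mem_Icc_left (v := fun s Z => A s * Z) (s := fun _ => univ)
      (fun s hs => hLip s (hsub (Ioc_subset_Icc_self hs))) (hXc.mono hsub)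
      (fun s hs => hXl s (ht.trans_lt hs.1)) (fun _ _ => trivial) (hYc.mono hsub)
      (fun s hs => hYl s (ht.trans_lt hs.1)) (fun _ _ => trivial) h ⟨le_rfl, hle⟩

theorem norm_le_gronwallBound_of_hasDerivWithinAt_mul_add {A : ℝ → Matrix m m ℝ}
    {B X : ℝ → Matrix m n ℝ} {a b t₀ : ℝ} (hA : ∀ t ∈ Ici t₀, ‖A t‖ ≤ a)
    (hB : ∀ t ∈ Ici t₀, ‖B t‖ ≤ b)
    (hX : ∀ t ∈ Ici t₀, HasDerivWithinAt X (A t * X t + B t) (Ici t₀) t) (h₀ : X t₀ = 0) :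
    ∀ t ∈ Ici t₀, ‖X t‖ ≤ gronwallBound 0 a b (t - t₀) := by
  intro t ht
  have hsub : Icc t₀ t ⊆ Ici t₀ := Icc_subset_Ici_self
  refine norm_le_gronwallBound_of_norm_deriv_right_le
    (fun s hs => (hX s (hsub hs)).continuousWithinAt.mono hsub)
    (fun s hs => (hX s hs.1).mono (Ici_subset_Ici.2 hs.1)) (by simp [h₀])
    (fun s hs => ?_) t ⟨ht, le_rfl⟩
  calc ‖A s * X s + B s‖ ≤ ‖A s‖ * ‖X s‖ + ‖B s‖ :=
        (norm_add_le _ _).trans (add_le_add_left (l2_opNorm_mul _ _) _)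
    _ ≤ a * ‖X s‖ + b := by
        gcongr
        exacts [hA s hs.1, hB s hs.1]

theorem isStateTransition_iff {F : ℝ → Matrix m m ℝ} {Φ : ℝ → ℝ → Matrix m m ℝ} :
    IsStateTransition F Φ ↔ (∀ t₀ ∈ Ici (0 : ℝ), Φ t₀ t₀ = 1) ∧
      ∀ t₀ ∈ Ici (0 : ℝ), ∀ t ∈ Ici (0 : ℝ),
        HasDerivWithinAt (fun s => Φ s t₀) (F t * Φ t t₀) (Ici 0) t := by
  simp only [IsStateTransition, hasDerivWithinAt_matrix_iff]

theorem IsStateTransition.mul_eq {F : ℝ → Matrix m m ℝ} {Φ : ℝ → ℝ → Matrix m m ℝ} {a : ℝ}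
    (hF : ∀ t ∈ Ici (0 : ℝ), ‖F t‖ ≤ a) (hΦ : IsStateTransition F Φ) {τ s u : ℝ}
    (hτ : τ ∈ Ici (0 : ℝ)) (hs : s ∈ Ici (0 : ℝ)) (hu : u ∈ Ici (0 : ℝ)) :
    Φ u s * Φ s τ = Φ u τ := by
  rw [isStateTransition_iff] at hΦ
  refine eqOn_Ici_of_hasDerivWithinAt_mul hF (X := fun u => Φ u s * Φ s τ) (fun t ht => ?_)
    (hΦ.2 τ hτ) hs (by simp [hΦ.1 s hs]) hu
  simpa [mul_assoc] using (hΦ.2 s hs t ht).mul_const (Φ s τ)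

end LinearODE

open Filter Topology in
theorem exists_pos_mul_exp_neg_le (K : ℝ) {μ c : ℝ} (hμ : 0 < μ) (hc : 0 < c) :
    ∃ σ, 0 < σ ∧ K * exp (-μ * σ) ≤ c := by
  have hlim : Tendsto (fun σ => K * exp (-μ * σ)) atTop (𝓝 0) := by
    simpa [neg_mul] using
      (tendsto_exp_neg_atTop_nhds_zero.comp (tendsto_id.const_mul_atTop hμ)).const_mul K
  exact ((eventually_gt_atTop 0).and (hlim.eventually (ge_mem_nhds hc))).exists

theorem le_mul_exp_of_renewal {f : ℝ → ℝ → ℝ} {σ C₀ A q μ ν : ℝ} (hσ : 0 < σ) (hC₀ : 0 ≤ C₀)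
    (hA : 0 ≤ A) (hq : 0 ≤ q) (hν₀ : 0 ≤ ν) (hν : ν ≤ μ) (hqν : q * exp (ν * σ) ≤ 1 / 2)
    (hloc : ∀ τ ∈ Ici (0 : ℝ), ∀ u ∈ Icc τ (τ + σ), f u τ ≤ C₀)
    (hrenew : ∀ τ ∈ Ici (0 : ℝ), ∀ u, τ + σ ≤ u →
      f u τ ≤ A * exp (-μ * (u - τ)) + q * f u (τ + σ)) :
    ∀ τ ∈ Ici (0 : ℝ), ∀ u, τ ≤ u → f u τ ≤ (C₀ * exp (ν * σ) + 2 * A) * exp (-ν * (u - τ)) := by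
  set C := C₀ * exp (ν * σ) + 2 * A
  have hC₀' : 0 ≤ C₀ * exp (ν * σ) := by positivity
  have hnear : ∀ τ ∈ Ici (0 : ℝ), ∀ u ∈ Icc τ (τ + σ), f u τ ≤ C * exp (-ν * (u - τ)) := by
    intro τ hτ u hu
    calc f u τ ≤ C₀ := hloc τ hτ u hu
      _ ≤ C₀ * exp (ν * σ + -ν * (u - τ)) := by
          refine le_mul_of_one_le_right hC₀ (one_le_exp ?_)
          nlinarith [hu.2]
      _ ≤ C * exp (-ν * (u - τ)) := by
          rw [exp_add, ← mul_assoc]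
          gcongr
          linarith
  suffices ∀ N : ℕ, ∀ τ ∈ Ici (0 : ℝ), ∀ u, τ ≤ u → u ≤ τ + N * σ →
      f u τ ≤ C * exp (-ν * (u - τ)) by
    intro τ hτ u hu
    obtain ⟨N, hN⟩ := exists_nat_ge ((u - τ) / σ)
    exact this N τ hτ u hu (by rw [div_le_iff₀ hσ] at hN; linarith)
  intro N
  induction N with
  | zero => exact fun τ hτ u hu hu' => hnear τ hτ u ⟨hu, by simp at hu'; linarith⟩
  | succ N ih =>
    intro τ hτ u hu hu'
    rcases le_or_gt u (τ + σ) with hle | hlt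
    · exact hnear τ hτ u ⟨hu, hle⟩
    have hτσ : τ + σ ∈ Ici (0 : ℝ) := by simp only [mem_Ici] at hτ ⊢; linarith
    have ih' := ih (τ + σ) hτσ u hlt.le (by push_cast at hu'; linarith)
    have hshift : exp (-ν * (u - (τ + σ))) = exp (ν * σ) * exp (-ν * (u - τ)) := by
      rw [← exp_add]; ring_nf
    calc f u τ ≤ A * exp (-μ * (u - τ)) + q * (C * exp (-ν * (u - (τ + σ)))) :=
          (hrenew τ hτ u hlt.le).trans (by gcongr)
      _ = A * exp (-μ * (u - τ)) + q * exp (ν * σ) * C * exp (-ν * (u - τ)) := by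
          rw [hshift]; ring
      _ ≤ A * exp (-ν * (u - τ)) + 1 / 2 * C * exp (-ν * (u - τ)) := by
          have : 0 ≤ C := by positivity
          gcongr
      _ = (A + 1 / 2 * C) * exp (-ν * (u - τ)) := by ring
      _ ≤ C * exp (-ν * (u - τ)) := by gcongr; linarith

theorem Matrix.fromBlocks_zero₂₁_mul {l m n α : Type*} [Fintype m] [Fintype n]
    [NonUnitalNonAssocSemiring α] (A : Matrix l m α) (B : Matrix l n α) (D : Matrix n n α)
    (M : Matrix (m ⊕ n) (m ⊕ n) α) :
    fromBlocks A B 0 D * M =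
      fromBlocks (A * M.toBlocks₁₁ + B * M.toBlocks₂₁) (A * M.toBlocks₁₂ + B * M.toBlocks₂₂)
        (D * M.toBlocks₂₁) (D * M.toBlocks₂₂) := by
  conv_lhs => rw [← fromBlocks_toBlocks M]
  simp [fromBlocks_multiply]

section BlockTriangular

variable {m n : Type*} [Fintype m] [Fintype n] [DecidableEq m] [DecidableEq n]
  {F₁₁ : ℝ → Matrix m m ℝ} {F₁₂ : ℝ → Matrix m n ℝ} {F₂₂ : ℝ → Matrix n n ℝ}
  {Φ : ℝ → ℝ → Matrix (m ⊕ n) (m ⊕ n) ℝ}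

theorem IsStateTransition.hasDerivWithinAt_fromBlocks
    (hΦ : IsStateTransition (fun t => fromBlocks (F₁₁ t) (F₁₂ t) 0 (F₂₂ t)) Φ)
    {t₀ t : ℝ} (ht₀ : t₀ ∈ Ici (0 : ℝ)) (ht : t ∈ Ici (0 : ℝ)) :
    HasDerivWithinAt (fun s => Φ s t₀)
      (fromBlocks (F₁₁ t * (Φ t t₀).toBlocks₁₁ + F₁₂ t * (Φ t t₀).toBlocks₂₁)
        (F₁₁ t * (Φ t t₀).toBlocks₁₂ + F₁₂ t * (Φ t t₀).toBlocks₂₂)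
        (F₂₂ t * (Φ t t₀).toBlocks₂₁) (F₂₂ t * (Φ t t₀).toBlocks₂₂)) (Ici 0) t := by
  rw [← fromBlocks_zero₂₁_mul]
  exact (isStateTransition_iff.1 hΦ).2 t₀ ht₀ t ht

theorem IsStateTransition.toBlocks₂₁_eq_zero {a : ℝ} (hF₂₂ : ∀ t ∈ Ici (0 : ℝ), ‖F₂₂ t‖ ≤ a)
    (hΦ : IsStateTransition (fun t => fromBlocks (F₁₁ t) (F₁₂ t) 0 (F₂₂ t)) Φ)
    {t₀ t : ℝ} (ht₀ : t₀ ∈ Ici (0 : ℝ)) (ht : t ∈ Ici (0 : ℝ)) : (Φ t t₀).toBlocks₂₁ = 0 := by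
  refine eqOn_Ici_of_hasDerivWithinAt_mul hF₂₂ (X := fun s => (Φ s t₀).toBlocks₂₁)
    (Y := fun _ => 0)
    (fun s hs => by simpa using (hΦ.hasDerivWithinAt_fromBlocks ht₀ hs).matrix_toBlocks₂₁)
    (fun s _ => by simpa using hasDerivWithinAt_const s (Ici (0 : ℝ)) (0 : Matrix n m ℝ))
    ht₀ (by simp [hΦ.1 t₀ ht₀, ← fromBlocks_one]) ht

theorem IsStateTransition.toBlocks₁₁ {a : ℝ} (hF₂₂ : ∀ t ∈ Ici (0 : ℝ), ‖F₂₂ t‖ ≤ a)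
    (hΦ : IsStateTransition (fun t => fromBlocks (F₁₁ t) (F₁₂ t) 0 (F₂₂ t)) Φ) :
    IsStateTransition F₁₁ fun t t₀ => (Φ t t₀).toBlocks₁₁ := by
  refine isStateTransition_iff.2
    ⟨fun t₀ ht₀ => by simp [hΦ.1 t₀ ht₀, ← fromBlocks_one], fun t₀ ht₀ t ht => ?_⟩
  simpa [hΦ.toBlocks₂₁_eq_zero hF₂₂ ht₀ ht] using
    (hΦ.hasDerivWithinAt_fromBlocks ht₀ ht).matrix_toBlocks₁₁

theorem IsStateTransition.toBlocks₂₂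
    (hΦ : IsStateTransition (fun t => fromBlocks (F₁₁ t) (F₁₂ t) 0 (F₂₂ t)) Φ) :
    IsStateTransition F₂₂ fun t t₀ => (Φ t t₀).toBlocks₂₂ :=
  isStateTransition_iff.2
    ⟨fun t₀ ht₀ => by simp [hΦ.1 t₀ ht₀, ← fromBlocks_one], fun t₀ ht₀ t ht => by
      simpa using (hΦ.hasDerivWithinAt_fromBlocks ht₀ ht).matrix_toBlocks₂₂⟩

theorem IsStateTransition.norm_toBlocks₁₂_le_gronwallBound {a₁₁ a₁₂ K₂ τ : ℝ}
    (hF₁₁ : ∀ t ∈ Ici (0 : ℝ), ‖F₁₁ t‖ ≤ a₁₁) (hF₁₂ : ∀ t ∈ Ici (0 : ℝ), ‖F₁₂ t‖ ≤ a₁₂)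
    (hΦ : IsStateTransition (fun t => fromBlocks (F₁₁ t) (F₁₂ t) 0 (F₂₂ t)) Φ)
    (hτ : τ ∈ Ici (0 : ℝ)) (hΦ₂₂ : ∀ t ∈ Ici τ, ‖(Φ t τ).toBlocks₂₂‖ ≤ K₂) :
    ∀ t ∈ Ici τ, ‖(Φ t τ).toBlocks₁₂‖ ≤ gronwallBound 0 a₁₁ (a₁₂ * K₂) (t - τ) := by
  have hJ : Ici τ ⊆ Ici (0 : ℝ) := Ici_subset_Ici.2 hτ
  refine norm_le_gronwallBound_of_hasDerivWithinAt_mul_add (fun t ht => hF₁₁ t (hJ ht))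
    (B := fun t => F₁₂ t * (Φ t τ).toBlocks₂₂) (fun t ht => ?_) (fun t ht => ?_)
    (by simp [hΦ.1 τ hτ, ← fromBlocks_one])
  · calc ‖F₁₂ t * (Φ t τ).toBlocks₂₂‖ ≤ ‖F₁₂ t‖ * ‖(Φ t τ).toBlocks₂₂‖ :=
          l2_opNorm_mul _ _
      _ ≤ a₁₂ * K₂ := by
          gcongr
          exacts [(norm_nonneg _).trans (hF₁₂ t (hJ ht)), hF₁₂ t (hJ ht), hΦ₂₂ t ht]
  · simpa using ((hΦ.hasDerivWithinAt_fromBlocks hτ (hJ ht)).matrix_toBlocks₁₂).mono hJ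

theorem IsStateTransition.toBlocks₁₂_eq {a₁₁ a₁₂ a₂₂ : ℝ}
    (hF₁₁ : ∀ t ∈ Ici (0 : ℝ), ‖F₁₁ t‖ ≤ a₁₁) (hF₁₂ : ∀ t ∈ Ici (0 : ℝ), ‖F₁₂ t‖ ≤ a₁₂)
    (hF₂₂ : ∀ t ∈ Ici (0 : ℝ), ‖F₂₂ t‖ ≤ a₂₂)
    (hΦ : IsStateTransition (fun t => fromBlocks (F₁₁ t) (F₁₂ t) 0 (F₂₂ t)) Φ)
    {τ s u : ℝ} (hτ : τ ∈ Ici (0 : ℝ)) (hs : s ∈ Ici (0 : ℝ)) (hu : u ∈ Ici (0 : ℝ)) :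
    (Φ u τ).toBlocks₁₂ =
      (Φ u s).toBlocks₁₁ * (Φ s τ).toBlocks₁₂ + (Φ u s).toBlocks₁₂ * (Φ s τ).toBlocks₂₂ := by
  obtain ⟨c, hc₀, hc⟩ := exists_norm_fromBlocks_zero₂₁_le (m := m) (n := n)
  have hF : ∀ t ∈ Ici (0 : ℝ),
      ‖fromBlocks (F₁₁ t) (F₁₂ t) 0 (F₂₂ t)‖ ≤ c * (a₁₁ + a₁₂ + a₂₂) := fun t ht =>
    (hc _ _ _).trans (by gcongr; exacts [hF₁₁ t ht, hF₁₂ t ht, hF₂₂ t ht])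
  rw [← hΦ.mul_eq hF hτ hs hu]
  conv_lhs => rw [← fromBlocks_toBlocks (Φ u s), ← fromBlocks_toBlocks (Φ s τ)]
  rw [fromBlocks_multiply, toBlocks_fromBlocks₁₂]

theorem IsStateTransition.norm_toBlocks₁₂_le_add {a₁₁ a₁₂ a₂₂ : ℝ}
    (hF₁₁ : ∀ t ∈ Ici (0 : ℝ), ‖F₁₁ t‖ ≤ a₁₁) (hF₁₂ : ∀ t ∈ Ici (0 : ℝ), ‖F₁₂ t‖ ≤ a₁₂)
    (hF₂₂ : ∀ t ∈ Ici (0 : ℝ), ‖F₂₂ t‖ ≤ a₂₂)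
    (hΦ : IsStateTransition (fun t => fromBlocks (F₁₁ t) (F₁₂ t) 0 (F₂₂ t)) Φ)
    {τ s u : ℝ} (hτ : τ ∈ Ici (0 : ℝ)) (hs : s ∈ Ici (0 : ℝ)) (hu : u ∈ Ici (0 : ℝ)) :
    ‖(Φ u τ).toBlocks₁₂‖ ≤ ‖(Φ u s).toBlocks₁₁‖ * ‖(Φ s τ).toBlocks₁₂‖
      + ‖(Φ u s).toBlocks₁₂‖ * ‖(Φ s τ).toBlocks₂₂‖ := by
  rw [hΦ.toBlocks₁₂_eq hF₁₁ hF₁₂ hF₂₂ hτ hs hu]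
  exact (norm_add_le _ _).trans (add_le_add (l2_opNorm_mul _ _) (l2_opNorm_mul _ _))

theorem exists_norm_toBlocks₁₂_le_mul_exp (hF₁₁ : UnifBdd F₁₁) (hF₁₂ : UnifBdd F₁₂)
    (hF₂₂ : UnifBdd F₂₂) (h₁ : SysUES F₁₁) (h₂ : SysUES F₂₂) :
    ∃ C ν, 0 ≤ C ∧ 0 < ν ∧ ∀ Φ : ℝ → ℝ → Matrix (m ⊕ n) (m ⊕ n) ℝ,
      IsStateTransition (fun t => fromBlocks (F₁₁ t) (F₁₂ t) 0 (F₂₂ t)) Φ →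
      ∀ τ ∈ Ici (0 : ℝ), ∀ t, τ ≤ t → ‖(Φ t τ).toBlocks₁₂‖ ≤ C * exp (-ν * (t - τ)) := by
  obtain ⟨a₁₁, ha₁₁⟩ := hF₁₁
  obtain ⟨a₁₂, ha₁₂⟩ := hF₁₂
  obtain ⟨a₂₂, ha₂₂⟩ := hF₂₂
  obtain ⟨K₁, hK₁, μ₁, hμ₁, hΦ₁₁⟩ := h₁
  obtain ⟨K₂, hK₂, μ₂, hμ₂, hΦ₂₂⟩ := h₂
  have ha₁₁₀ : 0 ≤ a₁₁ := (norm_nonneg _).trans (ha₁₁ 0 self_mem_Ici)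
  have ha₁₂₀ : 0 ≤ a₁₂ := (norm_nonneg _).trans (ha₁₂ 0 self_mem_Ici)
  set ν := min μ₁ (μ₂ / 2)
  have hνμ₂ : 0 < μ₂ - ν := sub_pos.2 ((min_le_right _ _).trans_lt (half_lt_self hμ₂))
  obtain ⟨σ, hσ, hK₂σ⟩ := exists_pos_mul_exp_neg_le K₂ hνμ₂ one_half_pos
  set C₀ := gronwallBound 0 a₁₁ (a₁₂ * K₂) σ
  have hC₀ : 0 ≤ C₀ := by
    simpa [gronwallBound_x0] using gronwallBound_mono le_rfl (by positivity) ha₁₁₀ hσ.le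
  refine ⟨C₀ * exp (ν * σ) + 2 * (K₁ * C₀ * exp (μ₁ * σ)), ν, by positivity,
    lt_min hμ₁ (half_pos hμ₂), fun Φ hΦ => ?_⟩
  have h₁₁ := hΦ₁₁ _ (hΦ.toBlocks₁₁ ha₂₂)
  have h₂₂ := hΦ₂₂ _ hΦ.toBlocks₂₂
  have hΦ₂₂' : ∀ τ ∈ Ici (0 : ℝ), ∀ t ∈ Ici τ, ‖(Φ t τ).toBlocks₂₂‖ ≤ K₂ := fun τ hτ t ht =>
    (h₂₂ τ hτ t ht).trans (mul_le_of_le_one_right (by positivity)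
      (exp_le_one_iff.2 (by nlinarith [mem_Ici.1 ht])))
  have hloc : ∀ τ ∈ Ici (0 : ℝ), ∀ u ∈ Icc τ (τ + σ), ‖(Φ u τ).toBlocks₁₂‖ ≤ C₀ :=
    fun τ hτ u hu => (hΦ.norm_toBlocks₁₂_le_gronwallBound ha₁₁ ha₁₂ hτ (hΦ₂₂' τ hτ) u hu.1).trans
      (gronwallBound_mono le_rfl (by positivity) ha₁₁₀ (by linarith [hu.2]))
  have hqν : K₂ * exp (-μ₂ * σ) * exp (ν * σ) ≤ 1 / 2 := by
    rwa [mul_assoc, ← exp_add, show -μ₂ * σ + ν * σ = -(μ₂ - ν) * σ by ring]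
  refine le_mul_exp_of_renewal (f := fun t τ => ‖(Φ t τ).toBlocks₁₂‖) (μ := μ₁)
    (q := K₂ * exp (-μ₂ * σ)) hσ hC₀ (by positivity) (by positivity) (by positivity)
    (min_le_left _ _) hqν hloc (fun τ hτ u hu => ?_)
  have hτσ : τ + σ ∈ Ici (0 : ℝ) := by simp only [mem_Ici] at hτ ⊢; linarith
  calc _ ≤ ‖(Φ u (τ + σ)).toBlocks₁₁‖ * ‖(Φ (τ + σ) τ).toBlocks₁₂‖
        + ‖(Φ u (τ + σ)).toBlocks₁₂‖ * ‖(Φ (τ + σ) τ).toBlocks₂₂‖ :=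
        hΦ.norm_toBlocks₁₂_le_add ha₁₁ ha₁₂ ha₂₂ hτ hτσ (hτσ.trans hu)
    _ ≤ K₁ * exp (-μ₁ * (u - (τ + σ))) * C₀
        + ‖(Φ u (τ + σ)).toBlocks₁₂‖ * (K₂ * exp (-μ₂ * (τ + σ - τ))) := by
        gcongr
        exacts [h₁₁ (τ + σ) hτσ u hu, hloc τ hτ (τ + σ) ⟨by linarith, le_rfl⟩,
          h₂₂ τ hτ (τ + σ) (by linarith)]
    _ = K₁ * C₀ * exp (μ₁ * σ) * exp (-μ₁ * (u - τ))
        + K₂ * exp (-μ₂ * σ) * ‖(Φ u (τ + σ)).toBlocks₁₂‖ := by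
        rw [show -μ₁ * (u - (τ + σ)) = μ₁ * σ + -μ₁ * (u - τ) by ring, add_sub_cancel_left, exp_add]
        ring

end BlockTriangular

/-- A block upper triangular system whose diagonal blocks are uniformly exponentially
stable is uniformly exponentially stable. -/
theorem block_triangular_UES
    (n k : ℕ)
    (F11 : ℝ → Matrix (Fin (n - k)) (Fin (n - k)) ℝ)
    (F12 : ℝ → Matrix (Fin (n - k)) (Fin k) ℝ)
    (F22 : ℝ → Matrix (Fin k) (Fin k) ℝ)
    (hF11 : ContinuousOnJ F11 ∧ UnifBdd F11)
    (hF12 : ContinuousOnJ F12 ∧ UnifBdd F12)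
    (hF22 : ContinuousOnJ F22 ∧ UnifBdd F22)
    (h1 : SysUES F11) (h2 : SysUES F22) :
    SysUES (fun t => Matrix.fromBlocks (F11 t) (F12 t) 0 (F22 t)) := by
  obtain ⟨C, ν, hC, hν, hΦ₁₂⟩ := exists_norm_toBlocks₁₂_le_mul_exp hF11.2 hF12.2 hF22.2 h1 h2
  obtain ⟨K₁, hK₁, μ₁, hμ₁, hΦ₁₁⟩ := h1
  obtain ⟨K₂, hK₂, μ₂, hμ₂, hΦ₂₂⟩ := h2
  obtain ⟨c, hc₀, hc⟩ := exists_norm_fromBlocks_zero₂₁_le (m := Fin (n - k)) (n := Fin k)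
  obtain ⟨a₂₂, ha₂₂⟩ := hF22.2
  set μ := min ν (min μ₁ μ₂)
  refine ⟨max 1 (c * (K₁ + C + K₂)), le_max_left _ _, μ, lt_min hν (lt_min hμ₁ hμ₂),
    fun Φ hΦ t₀ ht₀ t ht => ?_⟩
  have hdecay : ∀ {K μ' : ℝ}, 0 ≤ K → μ ≤ μ' →
      K * exp (-μ' * (t - t₀)) ≤ K * exp (-μ * (t - t₀)) := fun hK hμ' => by
    gcongr
  rw [mnorm_eq_norm, ← fromBlocks_toBlocks (Φ t t₀),
    hΦ.toBlocks₂₁_eq_zero ha₂₂ ht₀ (mem_Ici.2 (le_trans ht₀ ht))]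
  calc _ ≤ c * (‖(Φ t t₀).toBlocks₁₁‖ + ‖(Φ t t₀).toBlocks₁₂‖ + ‖(Φ t t₀).toBlocks₂₂‖) := hc _ _ _
    _ ≤ c * (K₁ * exp (-μ * (t - t₀)) + C * exp (-μ * (t - t₀)) + K₂ * exp (-μ * (t - t₀))) := by
        gcongr
        · exact (hΦ₁₁ _ (hΦ.toBlocks₁₁ ha₂₂) t₀ ht₀ t ht).trans
            (hdecay (by positivity) (by simp [μ]))
        · exact (hΦ₁₂ Φ hΦ t₀ ht₀ t ht).trans (hdecay hC (by simp [μ]))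
        · exact (hΦ₂₂ _ hΦ.toBlocks₂₂ t₀ ht₀ t ht).trans (hdecay (by positivity) (by simp [μ]))
    _ ≤ _ := by
        rw [← add_mul, ← add_mul, ← mul_assoc]
        gcongr
        exact le_max_right _ _
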